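/- arXiv:math/9507203 — 2 statements merged into one kernel-verified Lean document; each statement's English description precedes it below -/
import Mathlib

section
/- The class of CSA-groups is closed under direct limits: if G* is the direct limit of a directed system of CSA-groups with injective transition maps, then G* is a CSA-group. -/
/-- A maximal abelian subgroup: abelian and maximal among abelian subgroups. -/
def IsMaximalAbelian {G : Type*} [Group G] (M : Subgroup G) : Prop :=
  IsMulCommutative M ∧ ∀ N : Subgroup G, IsMulCommutative N → M ≤ N → N = M

/-- A subgroup `H` is malnormal (conjugately separated): `H ∩ H^x = 1` for `x ∉ H`. -/
def IsMalnormal {G : Type*} [Group G] (H : Subgroup G) : Prop :=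
  ∀ x : G, x ∉ H → ∀ g ∈ H, x⁻¹ * g * x ∈ H → g = 1

/-- A CSA-group: all maximal abelian subgroups are malnormal. -/
def IsCSA (G : Type*) [Group G] : Prop :=
  ∀ M : Subgroup G, IsMaximalAbelian M → IsMalnormal M

/-- Commutation is transitive on nontrivial elements. -/
def CommTrans (G : Type*) [Group G] : Prop :=
  ∀ a b c : G, a ≠ 1 → b ≠ 1 → c ≠ 1 → Commute a b → Commute b c → Commute a c

/-!
A group is CSA exactly when it is commutative-transitive and no nontrivial element commutes
with a conjugate of itself by an element it does not commute with. Both conditions speak about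
finitely many elements at a time, so they pass from the members of a directed cover by
subgroups to the whole group.
-/

def ConjCommRigid (G : Type*) [Group G] : Prop :=
  ∀ a x : G, a ≠ 1 → Commute (x⁻¹ * a * x) a → Commute x a

section

open Subgroup

variable {G : Type*} [Group G]

theorem Subgroup.exists_isMaximalAbelian_le (A : Subgroup G) [IsMulCommutative A] :
    ∃ M : Subgroup G, IsMaximalAbelian M ∧ A ≤ M := by
  obtain ⟨M, hAM, hM, hmax⟩ := zorn_le_nonempty₀ {N : Subgroup G | IsMulCommutative N}
    (fun c hcomm hchain N hN => by
      have : Nonempty c := ⟨⟨N, hN⟩⟩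
      have : ∀ K : c, IsMulCommutative K.1 := fun K => hcomm K.2
      refine ⟨⨆ K : c, K.1, isMulCommutative_iSup hchain.directed, fun K hK => ?_⟩
      exact le_iSup (fun K : c => K.1) ⟨K, hK⟩) A ‹_›
  exact ⟨M, ⟨hM, fun N hN hMN => le_antisymm (hmax hN hMN) hMN⟩, hAM⟩

theorem IsMaximalAbelian.le_centralizer {M : Subgroup G} (hM : IsMaximalAbelian M) {g : G}
    (hg : g ∈ M) : M ≤ centralizer {g} := fun m hm => by
  have := hM.1
  exact mem_centralizer_singleton_iff.mpr (setLike_mul_comm hm hg)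

theorem IsMaximalAbelian.centralizer_eq {M : Subgroup G} (hM : IsMaximalAbelian M) {g : G}
    (hg : g ∈ M) [IsMulCommutative (centralizer {g})] : centralizer {g} = M :=
  hM.2 _ ‹_› (hM.le_centralizer hg)

theorem Subgroup.isMulCommutative_centralizer_of_commTrans (h : CommTrans G) {g : G}
    (hg : g ≠ 1) : IsMulCommutative (centralizer {g}) := by
  refine .of_setLike_mul_comm fun u hu v hv => ?_
  rw [mem_centralizer_singleton_iff] at hu hv
  rcases eq_or_ne u 1 with rfl | hu1
  · simp
  rcases eq_or_ne v 1 with rfl | hv1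
  · simp
  exact (h u g v hu1 hg hv1 hu hv.symm).eq

theorem IsMaximalAbelian.centralizer_eq_of_isCSA (h : IsCSA G) {M : Subgroup G}
    (hM : IsMaximalAbelian M) {b : G} (hbM : b ∈ M) (hb : b ≠ 1) : centralizer {b} = M := by
  refine le_antisymm (fun z hz => ?_) (hM.le_centralizer hbM)
  by_contra hzM
  have hconj : z⁻¹ * b * z = b := by
    rw [mem_centralizer_singleton_iff] at hz
    rw [mul_assoc, ← hz, inv_mul_cancel_left]
  exact hb (h M hM z hzM b hbM (by rwa [hconj]))

theorem IsCSA.commTrans (h : IsCSA G) : CommTrans G := by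
  intro a b c _ hb _ hab hbc
  obtain ⟨M, hM, hbM⟩ := (zpowers b).exists_isMaximalAbelian_le
  have hC := hM.centralizer_eq_of_isCSA h (hbM (mem_zpowers b)) hb
  have hac : a ∈ M := hC ▸ mem_centralizer_singleton_iff.mpr hab.eq
  have hcc : c ∈ M := hC ▸ mem_centralizer_singleton_iff.mpr hbc.eq.symm
  have := hM.1
  exact setLike_mul_comm hac hcc

theorem IsCSA.conjCommRigid (h : IsCSA G) : ConjCommRigid G := by
  intro a x ha hconj
  obtain ⟨M, hM, haM⟩ := (zpowers a).exists_isMaximalAbelian_le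
  have haM : a ∈ M := haM (mem_zpowers a)
  have hC := hM.centralizer_eq_of_isCSA h haM ha
  have hxM : x ∈ M := by
    by_contra hxM
    refine ha (h M hM x hxM a haM ?_)
    rw [← hC, mem_centralizer_singleton_iff]
    exact hconj.eq
  exact mem_centralizer_singleton_iff.mp (hM.le_centralizer haM hxM)

theorem isCSA_of_commTrans_of_conjCommRigid (hct : CommTrans G) (hrig : ConjCommRigid G) :
    IsCSA G := by
  intro M hM x hxM g hgM hconj
  by_contra hg
  have := hM.1
  have := isMulCommutative_centralizer_of_commTrans hct hg
  have hxg : Commute x g := hrig g x hg (setLike_mul_comm hconj hgM)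
  exact hxM (hM.centralizer_eq hgM ▸ mem_centralizer_singleton_iff.mpr hxg.eq)

section DirectedCover

variable {ι : Type*} {H : ι → Subgroup G} (hdir : Directed (· ≤ ·) H)
  (hcover : ∀ g : G, ∃ i, g ∈ H i)
include hdir hcover

theorem Directed.exists_forall_mem_of_cover (s : Finset G) : ∃ i, ∀ g ∈ s, g ∈ H i := by
  classical
  choose f hf using hcover
  have : Nonempty ι := ⟨f 1⟩
  obtain ⟨i, hi⟩ := hdir.finset_le (s.image f)
  exact ⟨i, fun g hg => hi _ (Finset.mem_image_of_mem f hg) (hf g)⟩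

theorem commTrans_of_directed_cover (h : ∀ i, CommTrans (H i)) : CommTrans G := by
  classical
  intro a b c ha hb hc hab hbc
  obtain ⟨i, hi⟩ := hdir.exists_forall_mem_of_cover hcover {a, b, c}
  have := h i ⟨a, hi a (by simp)⟩ ⟨b, hi b (by simp)⟩ ⟨c, hi c (by simp)⟩
    (by simpa using ha) (by simpa using hb) (by simpa using hc)
    (Submonoid.commute_coe_coe.mp hab) (Submonoid.commute_coe_coe.mp hbc)
  exact Submonoid.commute_coe_coe.mpr this

theorem conjCommRigid_of_directed_cover (h : ∀ i, ConjCommRigid (H i)) : ConjCommRigid G := by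
  classical
  intro a x ha hconj
  obtain ⟨i, hi⟩ := hdir.exists_forall_mem_of_cover hcover {a, x}
  have := h i ⟨a, hi a (by simp)⟩ ⟨x, hi x (by simp)⟩ (by simpa using ha)
    (Submonoid.commute_coe_coe.mp hconj)
  exact Submonoid.commute_coe_coe.mpr this

end DirectedCover

end

theorem stmt_16 {G : Type*} [Group G] {ι : Type*} (H : ι → Subgroup G)
    (hdir : Directed (· ≤ ·) H) (hcsa : ∀ i, IsCSA (H i))
    (hcover : ∀ g : G, ∃ i, g ∈ H i) : IsCSA G :=
  isCSA_of_commTrans_of_conjCommRigid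
    (commTrans_of_directed_cover hdir hcover fun i => (hcsa i).commTrans)
    (conjCommRigid_of_directed_cover hdir hcover fun i => (hcsa i).conjCommRigid)
end

section
/- Let G* be the direct limit of a directed system of CSA-groups Gᵢ with injective transition maps, and let M be a maximal abelian subgroup of G*. Then for each i, the intersection Gᵢ ∩ M (under the canonical map) is either trivial or a maximal abelian subgroup of Gᵢ, and M is the union (direct limit) of these intersections. -/
/-! The hypotheses make `G` commutation-transitive: any three nontrivial elements `a, b, c` with
`[a, b] = [b, c] = 1` lie in a common `Gᵢ`, where a maximal abelian subgroup containing `b` must, by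
malnormality, contain `a` and `c`. In a commutation-transitive group the centralizer of a
nontrivial element is abelian, hence a maximal abelian subgroup is the centralizer of any of its
nontrivial elements. So if `Gᵢ ∩ M` contains `a ≠ 1`, it is the centralizer of `a` in `Gᵢ`, which
is maximal abelian there because `Gᵢ` inherits commutation-transitivity. -/

section

open Subgroup

variable {G : Type*} [Group G]

theorem exists_isMaximalAbelian_ge (K : Subgroup G) [IsMulCommutative K] :
    ∃ M : Subgroup G, K ≤ M ∧ IsMaximalAbelian M := by
  obtain ⟨M, hKM, hM, hmax⟩ := zorn_le_nonempty₀ {L : Subgroup G | IsMulCommutative L}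
    (fun c hc hchain L hL => by
      have : Nonempty c := ⟨⟨L, hL⟩⟩
      have : ∀ L : c, IsMulCommutative (L : Subgroup G) := fun L => hc L.2
      exact ⟨⨆ L : c, (L : Subgroup G), isMulCommutative_iSup hchain.directedOn.directed_val,
        fun L hL => le_iSup_of_le (⟨L, hL⟩ : c) le_rfl⟩)
    K ‹_›
  exact ⟨M, hKM, hM, fun N hN hMN => le_antisymm (hmax hN hMN) hMN⟩

theorem IsMalnormal.mem_of_commute {M : Subgroup G} (hM : IsMalnormal M) {a b : G}
    (hbM : b ∈ M) (hb : b ≠ 1) (hab : Commute a b) : a ∈ M := by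
  by_contra haM
  exact hb (hM a haM b hbM (by rwa [mul_assoc, ← hab.eq, inv_mul_cancel_left]))

theorem CommTrans.of_injective {G' : Type*} [Group G'] (h : CommTrans G') {f : G →* G'}
    (hf : Function.Injective f) : CommTrans G := by
  intro a b c ha hb hc hab hbc
  have hfac := h (f a) (f b) (f c) ((map_ne_one_iff f hf).2 ha) ((map_ne_one_iff f hf).2 hb)
    ((map_ne_one_iff f hf).2 hc) (hab.map f) (hbc.map f)
  exact hf (by rw [map_mul, map_mul]; exact hfac.eq)

theorem CommTrans.of_directed {ι : Type*} {H : ι → Subgroup G} (hdir : Directed (· ≤ ·) H)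
    (hcover : ∀ g : G, ∃ i, g ∈ H i) (h : ∀ i, CommTrans (H i)) : CommTrans G := by
  intro a b c ha hb hc hab hbc
  obtain ⟨i, hai⟩ := hcover a
  obtain ⟨j, hbj⟩ := hcover b
  obtain ⟨k, hck⟩ := hcover c
  obtain ⟨l, hil, hjl⟩ := hdir i j
  obtain ⟨m, hlm, hkm⟩ := hdir l k
  exact congrArg Subtype.val <| h m ⟨a, hlm (hil hai)⟩ ⟨b, hlm (hjl hbj)⟩ ⟨c, hkm hck⟩
    (by simpa using ha) (by simpa using hb) (by simpa using hc) (Subtype.ext hab) (Subtype.ext hbc)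

theorem CommTrans.isMaximalAbelian_centralizer (h : CommTrans G) {a : G} (ha : a ≠ 1) :
    IsMaximalAbelian (centralizer {a}) := by
  refine ⟨.of_setLike_mul_comm fun x hx y hy => ?_, fun N hN hle => ?_⟩
  · rcases eq_or_ne x 1 with rfl | hx1
    · simp
    rcases eq_or_ne y 1 with rfl | hy1
    · simp
    exact h x a y hx1 ha hy1 (mem_centralizer_singleton_iff.1 hx)
      (mem_centralizer_singleton_iff.1 hy).symm
  · have haN : a ∈ N := hle (mem_centralizer_singleton_iff.2 rfl)
    exact le_antisymm (fun b hb => mem_centralizer_singleton_iff.2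
      (setLike_mul_comm hb haN)) hle

theorem IsMaximalAbelian.eq_centralizer {M : Subgroup G} (hM : IsMaximalAbelian M)
    (h : CommTrans G) {a : G} (haM : a ∈ M) (ha : a ≠ 1) : M = centralizer {a} := by
  have := hM.1
  exact (hM.2 _ (h.isMaximalAbelian_centralizer ha).1 fun b hb =>
    mem_centralizer_singleton_iff.2 (setLike_mul_comm hb haM)).symm

theorem centralizer_singleton_subgroupOf {K : Subgroup G} (a : K) :
    (centralizer {(a : G)}).subgroupOf K = centralizer {a} := by
  ext x
  simp [mem_subgroupOf, mem_centralizer_singleton_iff, Subtype.ext_iff]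

theorem IsMaximalAbelian.subgroupOf_eq_bot_or {M : Subgroup G} (hM : IsMaximalAbelian M)
    (h : CommTrans G) (K : Subgroup G) :
    M.subgroupOf K = ⊥ ∨ IsMaximalAbelian (M.subgroupOf K) := by
  refine (M.subgroupOf K).bot_or_exists_ne_one.imp_right fun ⟨a, haM, ha⟩ => ?_
  rw [hM.eq_centralizer h (mem_subgroupOf.1 haM) (by simpa using ha),
    centralizer_singleton_subgroupOf]
  exact (h.of_injective K.subtype_injective).isMaximalAbelian_centralizer ha

end

theorem stmt_17 {G : Type*} [Group G] {ι : Type*} (H : ι → Subgroup G)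
    (hdir : Directed (· ≤ ·) H) (hcsa : ∀ i, IsCSA (H i))
    (hcover : ∀ g : G, ∃ i, g ∈ H i)
    (M : Subgroup G) (hM : IsMaximalAbelian M) :
    (∀ i, Subgroup.comap (H i).subtype M = ⊥ ∨
      IsMaximalAbelian (Subgroup.comap (H i).subtype M)) ∧
    M = ⨆ i, H i ⊓ M := by
  have hCT : CommTrans G := .of_directed hdir hcover fun i => (hcsa i).commTrans
  refine ⟨fun i => hM.subgroupOf_eq_bot_or hCT (H i),
    le_antisymm (fun g hg => ?_) (iSup_le fun _ => inf_le_right)⟩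
  obtain ⟨i, hi⟩ := hcover g
  exact Subgroup.mem_iSup_of_mem i ⟨hi, hg⟩
end
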